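/- (Sig-reduction to zero implies ordinary reduction to zero of the image.) Let f ∈ P^m with φ(f) ≠ 0, and suppose f →_{G,∗} h for some syzygy h (φ(h) = 0). Then φ(f) reduces to zero with respect to the set of polynomials φ(G) = { φ(g) : g ∈ G } in the ordinary sense: there is a finite chain φ(f) = p₀, p₁, …, p_k = 0 where each p_{i+1} = p_i − c·u·φ(g) for some g ∈ G, term u, and scalar c such that u·LT(φ(g)) ∈ T(p_i) and c = C_{u·LT(φ(g))}(p_i)/LC(φ(g)). -/

import Mathlib

open MvPolynomial

/-- A term (power product) identified with its exponent vector in `ℕⁿ`;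
the product of terms corresponds tord addition of exponent vectors. -/
abbrev Term (n : ℕ) := Fin n →₀ ℕ

/-- A module term `t·eᵢ` identified with the pair `(t, i)`. -/
abbrev MTerm (n m : ℕ) := (Fin n →₀ ℕ) × Fin m

/-- A monomial order on terms: a linear order with `1 ≤ t` for every term `t`,
compatible with term multiplication (= addition of exponent vectors). -/
structure TermOrder (n : ℕ) where
  le : Term n → Term n → Prop
  linear : IsLinearOrder (Term n) le
  bot : ∀ t : Term n, le 0 t
  add_le_add : ∀ u v w : Term n, le u v → le (w + u) (w + v)

/-- A compatible order extension `⪯` of a monomial order tord module terms: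
a linear order whose strict part is well-founded, satisfying
(i) `u ≤ v → u·eᵢ ⪯ v·eᵢ` and (ii) `t·eᵢ ⪯ t′·eⱼ → (u·t)·eᵢ ⪯ (u·t′)·eⱼ`. -/
structure ModOrder (n m : ℕ) (tord : TermOrder n) where
  le : MTerm n m → MTerm n m → Prop
  linear : IsLinearOrder (MTerm n m) le
  wf : WellFounded (fun a b : MTerm n m => le a b ∧ a ≠ b)
  compat : ∀ u v : Term n, tord.le u v → ∀ i : Fin m, le (u, i) (v, i)
  stable : ∀ (t t' : Term n) (i j : Fin m) (u : Term n),
      le (t, i) (t', j) → le (u + t, i) (u + t', j)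

variable {F : Type*} [Field F] {n m : ℕ}

/-- `IsLT tord f t` : `t` is the leading term of the polynomial `f` w.r.t. `tord`. -/
def IsLT (tord : TermOrder n) (f : MvPolynomial (Fin n) F) (t : Term n) : Prop :=
  t ∈ f.support ∧ ∀ u ∈ f.support, tord.le u t

/-- The module homomorphism `φ : P^m → P`, `(p₁,…,p_m) ↦ Σᵢ pᵢ·fᵢ`. -/
noncomputable def phi (fs : Fin m → MvPolynomial (Fin n) F)
    (f : Fin m → MvPolynomial (Fin n) F) : MvPolynomial (Fin n) F :=
  ∑ i, f i * fs i

/-- The set of module terms occurring in a module element with nonzero coefficient. -/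
def msupport (f : Fin m → MvPolynomial (Fin n) F) : Set (MTerm n m) :=
  {σ | MvPolynomial.coeff σ.1 (f σ.2) ≠ 0}

/-- `IsSig mo f σ` : `σ` is the signature of `f`, i.e. the `⪯`-largest module term of `f`. -/
def IsSig {tord : TermOrder n} (mo : ModOrder n m tord)
    (f : Fin m → MvPolynomial (Fin n) F) (σ : MTerm n m) : Prop :=
  σ ∈ msupport f ∧ ∀ τ ∈ msupport f, mo.le τ σ

/-- Multiplication of a module element by a term `u`. -/
noncomputable def tmul (u : Term n) (f : Fin m → MvPolynomial (Fin n) F) :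
    Fin m → MvPolynomial (Fin n) F :=
  fun i => MvPolynomial.monomial u (1 : F) * f i

/-- The strict part `≺` of `⪯`. -/
def mlt {tord : TermOrder n} (mo : ModOrder n m tord) (a b : MTerm n m) : Prop :=
  mo.le a b ∧ a ≠ b

/-- `σ ≺ s` where `s` is a module term or the formal symbol `∞ = ⊤`
(with `r ≺ ∞` for every module term `r`). -/
def ltE {tord : TermOrder n} (mo : ModOrder n m tord) (σ : MTerm n m)
    (s : WithTop (MTerm n m)) : Prop :=
  ∀ τ : MTerm n m, s = ↑τ → mlt mo σ τ

/-- `σ ⪯ s` where `s` is a module term or the formal symbol `∞ = ⊤`. -/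
def leE {tord : TermOrder n} (mo : ModOrder n m tord) (σ : MTerm n m)
    (s : WithTop (MTerm n m)) : Prop :=
  ∀ τ : MTerm n m, s = ↑τ → mo.le σ τ

/-- A term `t` is Sig-reducible w.r.t. `G` up tord `s` if there are `g ∈ G` and a term `u`
with `LT(φ(u·g)) = t` and `sig(u·g) ≺ s`. -/
def SigRedTerm (tord : TermOrder n) (mo : ModOrder n m tord)
    (fs : Fin m → MvPolynomial (Fin n) F)
    (G : Finset (Fin m → MvPolynomial (Fin n) F))
    (s : WithTop (MTerm n m)) (t : Term n) : Prop :=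
  ∃ g ∈ G, ∃ (u : Term n) (σ : MTerm n m),
    IsLT tord (phi fs (tmul u g)) t ∧ IsSig mo (tmul u g) σ ∧ ltE mo σ s

/-- `h` is Sig-tail-irreducible w.r.t. `G` up tord `s` : no term of `Tail(φ(h))`
is Sig-reducible w.r.t. `G` up tord `s`. -/
def SigTailIrred (tord : TermOrder n) (mo : ModOrder n m tord)
    (fs : Fin m → MvPolynomial (Fin n) F)
    (G : Finset (Fin m → MvPolynomial (Fin n) F))
    (h : Fin m → MvPolynomial (Fin n) F) (s : WithTop (MTerm n m)) : Prop :=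
  ∀ lt : Term n, IsLT tord (phi fs h) lt →
    ∀ t ∈ (phi fs h).support, t ≠ lt → ¬ SigRedTerm tord mo fs G s t

/-- A Sig-reduction step on `f` w.r.t. `G` at the term `t ∈ T(φ(f))`, producing `f'`. -/
def SigRedStepAt (tord : TermOrder n) (mo : ModOrder n m tord)
    (fs : Fin m → MvPolynomial (Fin n) F)
    (G : Finset (Fin m → MvPolynomial (Fin n) F))
    (t : Term n) (f f' : Fin m → MvPolynomial (Fin n) F) : Prop :=
  ∃ g ∈ G, ∃ (u lg : Term n) (σf σug : MTerm n m),
    t ∈ (phi fs f).support ∧ IsLT tord (phi fs g) lg ∧ t = u + lg ∧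
    IsSig mo f σf ∧ IsSig mo (tmul u g) σug ∧ mo.le σug σf ∧
    f' = f - (MvPolynomial.coeff t (phi fs f) / MvPolynomial.coeff lg (phi fs g)) • tmul u g

/-- A regular Sig-reduction step at `t` : additionally `sig(u·g) ≺ sig(f)`. -/
def RegSigRedStepAt (tord : TermOrder n) (mo : ModOrder n m tord)
    (fs : Fin m → MvPolynomial (Fin n) F)
    (G : Finset (Fin m → MvPolynomial (Fin n) F))
    (t : Term n) (f f' : Fin m → MvPolynomial (Fin n) F) : Prop :=
  ∃ g ∈ G, ∃ (u lg : Term n) (σf σug : MTerm n m),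
    t ∈ (phi fs f).support ∧ IsLT tord (phi fs g) lg ∧ t = u + lg ∧
    IsSig mo f σf ∧ IsSig mo (tmul u g) σug ∧ mlt mo σug σf ∧
    f' = f - (MvPolynomial.coeff t (phi fs f) / MvPolynomial.coeff lg (phi fs g)) • tmul u g

/-- A Sig-reduction step on `f` w.r.t. `G`. -/
def SigRedStep (tord : TermOrder n) (mo : ModOrder n m tord)
    (fs : Fin m → MvPolynomial (Fin n) F)
    (G : Finset (Fin m → MvPolynomial (Fin n) F))
    (f f' : Fin m → MvPolynomial (Fin n) F) : Prop :=
  ∃ t : Term n, SigRedStepAt tord mo fs G t f f'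

/-- A regular Sig-reduction step on `f` w.r.t. `G`. -/
def RegSigRedStep (tord : TermOrder n) (mo : ModOrder n m tord)
    (fs : Fin m → MvPolynomial (Fin n) F)
    (G : Finset (Fin m → MvPolynomial (Fin n) F))
    (f f' : Fin m → MvPolynomial (Fin n) F) : Prop :=
  ∃ t : Term n, RegSigRedStepAt tord mo fs G t f f'

/-- `f` Sig-reduces tord zero w.r.t. `G` : `f →_{G,∗} h` for some syzygy `h`. -/
def SigReducesToZero (tord : TermOrder n) (mo : ModOrder n m tord)
    (fs : Fin m → MvPolynomial (Fin n) F)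
    (G : Finset (Fin m → MvPolynomial (Fin n) F))
    (f : Fin m → MvPolynomial (Fin n) F) : Prop :=
  ∃ h, Relation.ReflTransGen (SigRedStep tord mo fs G) f h ∧ phi fs h = 0

/-- `G` is a Sig-Gröbner basis up tord the module term `s` :
every nonzero `f` with `sig(f) ≺ s` Sig-reduces tord zero w.r.t. `G`. -/
def SigGBUpTo (tord : TermOrder n) (mo : ModOrder n m tord)
    (fs : Fin m → MvPolynomial (Fin n) F)
    (G : Finset (Fin m → MvPolynomial (Fin n) F)) (s : MTerm n m) : Prop :=
  ∀ f σ, f ≠ 0 → IsSig mo f σ → mlt mo σ s → SigReducesToZero tord mo fs G f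

/-- `q` is a regular Sig-normal form of `p` w.r.t. `G`. -/
def RegNF (tord : TermOrder n) (mo : ModOrder n m tord)
    (fs : Fin m → MvPolynomial (Fin n) F)
    (G : Finset (Fin m → MvPolynomial (Fin n) F))
    (p q : Fin m → MvPolynomial (Fin n) F) : Prop :=
  Relation.ReflTransGen (RegSigRedStep tord mo fs G) p q ∧
    ∀ q', ¬ RegSigRedStep tord mo fs G q q'

/-- `h` is singularly Sig-top-reducible w.r.t. `G` : a singular Sig-top-reduction step
applies tord `h`. -/
def SingTopReducible (tord : TermOrder n) (mo : ModOrder n m tord)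
    (fs : Fin m → MvPolynomial (Fin n) F)
    (G : Finset (Fin m → MvPolynomial (Fin n) F))
    (h : Fin m → MvPolynomial (Fin n) F) : Prop :=
  ∃ t : Term n, IsLT tord (phi fs h) t ∧
    ∃ g ∈ G, ∃ (u lg : Term n) (σh σug : MTerm n m),
      IsLT tord (phi fs g) lg ∧ t = u + lg ∧
      IsSig mo h σh ∧ IsSig mo (tmul u g) σug ∧ σug = σh

/-- The least common multiple of two terms: the pointwise maximum of exponent vectors. -/
noncomputable def lcmTerm (a b : Term n) : Term n := Finsupp.zipWith max (max_self 0) a b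

/-- `p` is the S-pair of `f` and `g` and this S-pair is regular. -/
def IsRegSpair (tord : TermOrder n) (mo : ModOrder n m tord)
    (fs : Fin m → MvPolynomial (Fin n) F)
    (f g p : Fin m → MvPolynomial (Fin n) F) : Prop :=
  ∃ lf lg : Term n, IsLT tord (phi fs f) lf ∧ IsLT tord (phi fs g) lg ∧
    (∀ σ₁ σ₂ : MTerm n m, IsSig mo (tmul (lcmTerm lf lg - lf) f) σ₁ →
      IsSig mo (tmul (lcmTerm lf lg - lg) g) σ₂ → σ₁ ≠ σ₂) ∧
    p = (MvPolynomial.coeff lf (phi fs f))⁻¹ • tmul (lcmTerm lf lg - lf) f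
      - (MvPolynomial.coeff lg (phi fs g))⁻¹ • tmul (lcmTerm lf lg - lg) g

/-- `T_G(f)` : the set of terms of `f` that are reducible w.r.t. the set `G`
of nonzero polynomials. -/
def TRed (tord : TermOrder n) (G : Finset (MvPolynomial (Fin n) F))
    (f : MvPolynomial (Fin n) F) : Set (Term n) :=
  {t | t ∈ f.support ∧ ∃ g ∈ G, ∃ lg u : Term n, IsLT tord g lg ∧ t = u + lg}

/-- An ordinary reduction step on a polynomial `p` w.r.t. the polynomials `φ(g)`, `g ∈ G`. -/
noncomputable def OrdRedStep (tord : TermOrder n)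
    (fs : Fin m → MvPolynomial (Fin n) F)
    (G : Finset (Fin m → MvPolynomial (Fin n) F))
    (p p' : MvPolynomial (Fin n) F) : Prop :=
  ∃ g ∈ G, ∃ (u lg : Term n),
    IsLT tord (phi fs g) lg ∧ (u + lg) ∈ p.support ∧
    p' = p - (MvPolynomial.coeff (u + lg) p / MvPolynomial.coeff lg (phi fs g)) •
      (MvPolynomial.monomial u (1 : F) * phi fs g)

lemma phi_sub_smul {F : Type*} [Field F] {n m : ℕ}
    (fs : Fin m → MvPolynomial (Fin n) F) (a b : Fin m → MvPolynomial (Fin n) F)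
    (c : F) : phi fs (a - c • b) = phi fs a - c • phi fs b := by
  simp [phi, sub_mul, Finset.sum_sub_distrib, Finset.smul_sum, smul_mul_assoc]

lemma phi_tmul {F : Type*} [Field F] {n m : ℕ}
    (fs : Fin m → MvPolynomial (Fin n) F) (u : Term n)
    (g : Fin m → MvPolynomial (Fin n) F) :
    phi fs (tmul u g) = MvPolynomial.monomial u (1 : F) * phi fs g := by
  simp [phi, tmul, Finset.mul_sum, mul_assoc]

lemma sig_step_to_ord {F : Type*} [Field F] {n m : ℕ}
    (tord : TermOrder n) (mo : ModOrder n m tord)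
    (fs : Fin m → MvPolynomial (Fin n) F)
    (G : Finset (Fin m → MvPolynomial (Fin n) F))
    {f f' : Fin m → MvPolynomial (Fin n) F}
    (hstep : SigRedStep tord mo fs G f f') :
    OrdRedStep tord fs G (phi fs f) (phi fs f') := by
  obtain ⟨t, g, hg, u, lg, σf, σug, ht, hlt, htu, _, _, _, hf'⟩ := hstep
  refine ⟨g, hg, u, lg, hlt, by rwa [← htu], ?_⟩
  subst hf' htu
  rw [phi_sub_smul, phi_tmul]

/-- Sig-reduction to zero implies ordinary reduction to zero of the
image. If `f →_{G,∗} h` for a syzygy `h`, then `φ(f)` reduces to zero w.r.t.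
`φ(G)` by a finite chain of ordinary reduction steps. -/
theorem statement10 {F : Type*} [Field F] {n m : ℕ} (hn : 0 < n) (hm : 0 < m)
    (tord : TermOrder n) (mo : ModOrder n m tord)
    (fs : Fin m → MvPolynomial (Fin n) F) (hfs : ∀ i, fs i ≠ 0)
    (G : Finset (Fin m → MvPolynomial (Fin n) F))
    (hG0 : ∀ g ∈ G, g ≠ 0) (hGphi : ∀ g ∈ G, phi fs g ≠ 0)
    (f h : Fin m → MvPolynomial (Fin n) F) (hf : phi fs f ≠ 0)
    (hred : Relation.ReflTransGen (SigRedStep tord mo fs G) f h)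
    (hsyz : phi fs h = 0) :
    Relation.ReflTransGen (OrdRedStep tord fs G) (phi fs f) 0 := by
  have : Relation.ReflTransGen (OrdRedStep tord fs G) (phi fs f) (phi fs h) :=
    Relation.ReflTransGen.lift (phi fs)
    (fun a b hab => sig_step_to_ord tord mo fs G hab) f h hred
  rwa [hsyz] at this
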